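/- arXiv:1410.6351 — 6 statements merged into one kernel-verified Lean document; each statement's English description precedes it below -/
import Mathlib

section
/- For all real numbers a₁, a₂ ≥ 0 with (a₁ - a₂)^2 ≤ a₁ + a₂ and a₁ + a₂ > 0, and all real x₁, x₂ > 0, one has x₁^{a₁} x₂^{a₂} + x₂^{a₁} x₁^{a₂} ≤ 2^{1 - a₁ - a₂} (x₁ + x₂)^{a₁ + a₂}. -/
/-! Writing `x₁ = exp (c + t)`, `x₂ = exp (c - t)`, `d = a₁ - a₂`, `s = a₁ + a₂`, both sides
become `2 exp (s c)` times `cosh (d t)` and `cosh t ^ s` respectively, so the claim is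
`cosh (d t) ≤ cosh t ^ s` whenever `max |d| d² ≤ s`. For `d, t ≥ 0` the function
`s log cosh t - log cosh (d t)` vanishes at `0` and is increasing, because
`d tanh (d t) ≤ s tanh t`: for `d ≤ 1` since `tanh (d t) ≤ tanh t`, and for `d ≥ 1` since
`tanh (d t) ≤ d tanh t`. -/

open Real

namespace Real

lemma sinh_mul_mul_cosh_le_of_le_one {d t : ℝ} (hd : d ≤ 1) (ht : 0 ≤ t) :
    sinh (d * t) * cosh t ≤ sinh t * cosh (d * t) := by
  have h : 0 ≤ sinh (t - d * t) := sinh_nonneg_iff.2 (by nlinarith)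
  rw [sinh_sub] at h
  linarith

lemma sinh_mul_mul_cosh_le_of_one_le {d t : ℝ} (hd : 1 ≤ d) (ht : 0 ≤ t) :
    sinh (d * t) * cosh t ≤ d * (sinh t * cosh (d * t)) := by
  let k : ℝ → ℝ := fun t ↦ d * (sinh t * cosh (d * t)) - sinh (d * t) * cosh t
  have hk : ∀ t, HasDerivAt k ((d ^ 2 - 1) * (sinh t * sinh (d * t))) t := by
    intro t
    have hdt : HasDerivAt (fun t ↦ d * t) d t := by simpa using (hasDerivAt_id t).const_mul d
    refine ((((hasDerivAt_sinh t).mul ((hasDerivAt_cosh _).comp t hdt)).const_mul d).sub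
      (((hasDerivAt_sinh _).comp t hdt).mul (hasDerivAt_cosh t))).congr_deriv ?_
    simp only [Function.comp_apply]
    ring
  have hk' : ∀ t, 0 ≤ (d ^ 2 - 1) * (sinh t * sinh (d * t)) := by
    intro t
    refine mul_nonneg (by nlinarith) ?_
    rcases le_total 0 t with h | h
    · exact mul_nonneg (sinh_nonneg_iff.2 h) (sinh_nonneg_iff.2 (by nlinarith))
    · exact mul_nonneg_of_nonpos_of_nonpos (sinh_nonpos_iff.2 h)
        (sinh_nonpos_iff.2 (by nlinarith))
  have := monotone_of_hasDerivAt_nonneg hk hk' ht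
  simp only [k, mul_zero, sinh_zero, cosh_zero] at this
  linarith

lemma mul_sinh_mul_mul_cosh_le {d s t : ℝ} (hd : 0 ≤ d) (hds : d ≤ s) (hd2s : d ^ 2 ≤ s)
    (ht : 0 ≤ t) : d * (sinh (d * t) * cosh t) ≤ s * (sinh t * cosh (d * t)) := by
  have hpos : 0 ≤ sinh t * cosh (d * t) := mul_nonneg (sinh_nonneg_iff.2 ht) (cosh_pos _).le
  rcases le_total d 1 with hd1 | hd1
  · calc d * (sinh (d * t) * cosh t) ≤ d * (sinh t * cosh (d * t)) :=
          mul_le_mul_of_nonneg_left (sinh_mul_mul_cosh_le_of_le_one hd1 ht) hd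
      _ ≤ s * (sinh t * cosh (d * t)) := mul_le_mul_of_nonneg_right hds hpos
  · calc d * (sinh (d * t) * cosh t) ≤ d * (d * (sinh t * cosh (d * t))) :=
          mul_le_mul_of_nonneg_left (sinh_mul_mul_cosh_le_of_one_le hd1 ht) hd
      _ = d ^ 2 * (sinh t * cosh (d * t)) := by ring
      _ ≤ s * (sinh t * cosh (d * t)) := mul_le_mul_of_nonneg_right hd2s hpos

lemma cosh_mul_le_cosh_rpow_of_nonneg {d s t : ℝ} (hd : 0 ≤ d) (hds : d ≤ s) (hd2s : d ^ 2 ≤ s)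
    (ht : 0 ≤ t) : cosh (d * t) ≤ cosh t ^ s := by
  let g : ℝ → ℝ := fun t ↦ s * log (cosh t) - log (cosh (d * t))
  have hg : ∀ t, HasDerivAt g (s * (sinh t / cosh t) - d * sinh (d * t) / cosh (d * t)) t := by
    intro t
    have hdt : HasDerivAt (fun t ↦ d * t) d t := by simpa using (hasDerivAt_id t).const_mul d
    refine ((((hasDerivAt_cosh t).log (cosh_pos t).ne').const_mul s).sub
      (((hasDerivAt_cosh _).comp t hdt).log (cosh_pos _).ne')).congr_deriv ?_
    simp only [Function.comp_apply]
    ring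
  have hg' : ∀ t ∈ interior (Set.Ici (0 : ℝ)),
      0 ≤ s * (sinh t / cosh t) - d * sinh (d * t) / cosh (d * t) := by
    intro t ht
    rw [interior_Ici] at ht
    have := mul_sinh_mul_mul_cosh_le hd hds hd2s ht.le
    rw [sub_nonneg, mul_div_assoc', div_le_div_iff₀ (cosh_pos _) (cosh_pos _)]
    linarith
  have hmono := monotoneOn_of_hasDerivWithinAt_nonneg (convex_Ici 0)
    (fun t _ ↦ (hg t).continuousAt.continuousWithinAt) (fun t _ ↦ (hg t).hasDerivWithinAt) hg'
    Set.self_mem_Ici ht ht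
  simp only [g, mul_zero, cosh_zero, log_one, sub_zero] at hmono
  rw [← log_le_log_iff (cosh_pos _) (rpow_pos_of_pos (cosh_pos t) s), log_rpow (cosh_pos t)]
  linarith

lemma cosh_mul_le_cosh_rpow {d s : ℝ} (hds : |d| ≤ s) (hd2s : d ^ 2 ≤ s) (t : ℝ) :
    cosh (d * t) ≤ cosh t ^ s := by
  rw [← cosh_abs, abs_mul, ← cosh_abs t]
  exact cosh_mul_le_cosh_rpow_of_nonneg (abs_nonneg d) hds (by rwa [sq_abs]) (abs_nonneg t)

lemma exp_add_add_exp_sub (c t : ℝ) : exp (c + t) + exp (c - t) = 2 * exp c * cosh t := by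
  rw [cosh_eq, exp_add, sub_eq_add_neg, exp_add]
  ring

end Real

theorem two_var_muirhead_general (a₁ a₂ : ℝ) (ha₁ : 0 ≤ a₁) (ha₂ : 0 ≤ a₂)
    (h : (a₁ - a₂)^2 ≤ a₁ + a₂)
    (x₁ x₂ : ℝ) (hx₁ : 0 < x₁) (hx₂ : 0 < x₂) :
    x₁ ^ a₁ * x₂ ^ a₂ + x₂ ^ a₁ * x₁ ^ a₂
      ≤ (2 : ℝ) ^ (1 - a₁ - a₂) * (x₁ + x₂) ^ (a₁ + a₂) := by
  obtain ⟨c, t, rfl, rfl⟩ : ∃ c t, x₁ = exp (c + t) ∧ x₂ = exp (c - t) :=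
    ⟨(log x₁ + log x₂) / 2, (log x₁ - log x₂) / 2, by
      rw [show (log x₁ + log x₂) / 2 + (log x₁ - log x₂) / 2 = log x₁ by ring, exp_log hx₁], by
      rw [show (log x₁ + log x₂) / 2 - (log x₁ - log x₂) / 2 = log x₂ by ring, exp_log hx₂]⟩
  have hlhs : exp (c + t) ^ a₁ * exp (c - t) ^ a₂ + exp (c - t) ^ a₁ * exp (c + t) ^ a₂
      = 2 * exp ((a₁ + a₂) * c) * cosh ((a₁ - a₂) * t) := by
    simp only [← exp_mul, ← exp_add, ← exp_add_add_exp_sub]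
    ring_nf
  have hrhs : (2 : ℝ) ^ (1 - a₁ - a₂) * (exp (c + t) + exp (c - t)) ^ (a₁ + a₂)
      = 2 * exp ((a₁ + a₂) * c) * cosh t ^ (a₁ + a₂) := by
    rw [exp_add_add_exp_sub, mul_rpow (by positivity) (cosh_pos t).le,
      mul_rpow zero_le_two (exp_pos c).le, ← exp_mul, sub_sub, ← mul_assoc, ← mul_assoc,
      ← rpow_add two_pos, sub_add_cancel, rpow_one, mul_comm c]
  rw [hlhs, hrhs]
  gcongr
  exact cosh_mul_le_cosh_rpow (abs_le.2 ⟨by linarith, by linarith⟩) h t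

theorem two_var_muirhead (a₁ a₂ : ℝ) (ha₁ : 0 ≤ a₁) (ha₂ : 0 ≤ a₂)
    (h : (a₁ - a₂)^2 ≤ a₁ + a₂) (hs : 0 < a₁ + a₂)
    (x₁ x₂ : ℝ) (hx₁ : 0 < x₁) (hx₂ : 0 < x₂) :
    x₁ ^ a₁ * x₂ ^ a₂ + x₂ ^ a₁ * x₁ ^ a₂
      ≤ (2 : ℝ) ^ (1 - a₁ - a₂) * (x₁ + x₂) ^ (a₁ + a₂) :=
  two_var_muirhead_general a₁ a₂ ha₁ ha₂ h x₁ x₂ hx₁ hx₂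
end

section
/- Let m ≥ 1, and let a₁,…,a_m ≥ 0 with s := a₁ + ⋯ + a_m satisfying 0 < s ≤ 1. Then for all x₁,…,x_m ≥ 0 (with the convention 0^0 = 1), ∑_{σ ∈ S_m} x_{σ(1)}^{a₁} ⋯ x_{σ(m)}^{a_m} ≤ m! · m^{-s} · (x₁ + ⋯ + x_m)^s. -/
/-!
Weighted AM–GM with weights `aᵢ / s` bounds each term by `∑ᵢ (aᵢ / s) x_{σ(i)}^s`.
Summed over `S_m`, every `x_j^s` is hit `(m-1)!` times in each slot, so the left-hand side is at
most `(m-1)! ∑ⱼ xⱼ^s`; concavity of `t ↦ t^s` for `s ≤ 1` then gives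
`∑ⱼ xⱼ^s ≤ m ((∑ⱼ xⱼ) / m)^s`.
-/

open Finset

theorem Real.prod_rpow_le_sum_div_mul_rpow {ι : Type*} (t : Finset ι) {a y : ι → ℝ}
    (ha : ∀ i ∈ t, 0 ≤ a i) (hs : 0 < ∑ i ∈ t, a i) (hy : ∀ i ∈ t, 0 ≤ y i) :
    ∏ i ∈ t, y i ^ a i ≤ ∑ i ∈ t, a i / (∑ j ∈ t, a j) * y i ^ (∑ j ∈ t, a j) := by
  set s := ∑ j ∈ t, a j
  have hpow : ∀ i ∈ t, y i ^ a i = (y i ^ s) ^ (a i / s) := fun i hi => by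
    rw [← Real.rpow_mul (hy i hi), mul_div_cancel₀ _ hs.ne']
  rw [prod_congr rfl hpow]
  exact Real.geom_mean_le_arith_mean_weighted t _ _ (fun i hi => div_nonneg (ha i hi) hs.le)
    (by rw [← sum_div, div_self hs.ne']) (fun i hi => Real.rpow_nonneg (hy i hi) _)

theorem Real.sum_rpow_le_card_mul_rpow_div {ι : Type*} {t : Finset ι} (ht : t.Nonempty)
    {y : ι → ℝ} (hy : ∀ i ∈ t, 0 ≤ y i) {p : ℝ} (hp₀ : 0 ≤ p) (hp₁ : p ≤ 1) :
    ∑ i ∈ t, y i ^ p ≤ #t * ((∑ i ∈ t, y i) / #t) ^ p := by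
  have hcard : (0 : ℝ) < #t := by exact_mod_cast ht.card_pos
  have hjensen := (Real.concaveOn_rpow hp₀ hp₁).le_map_sum (t := t) (w := fun _ => (#t : ℝ)⁻¹)
    (fun _ _ => by positivity) (by simp [hcard.ne']) (p := y) hy
  simp only [smul_eq_mul, ← mul_sum] at hjensen
  rw [div_eq_inv_mul]
  calc ∑ i ∈ t, y i ^ p = #t * ((#t : ℝ)⁻¹ * ∑ i ∈ t, y i ^ p) := by field_simp
    _ ≤ #t * ((#t : ℝ)⁻¹ * ∑ i ∈ t, y i) ^ p := by gcongr

theorem Equiv.Perm.card_smul_sum_apply {α M : Type*} [Fintype α] [DecidableEq α]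
    [AddCommMonoid M] (f : α → M) (i : α) :
    Fintype.card α • ∑ σ : Perm α, f (σ i) = (Fintype.card α).factorial • ∑ j, f j := by
  have hslot : ∀ j, ∑ σ : Perm α, f (σ j) = ∑ σ : Perm α, f (σ i) := fun j =>
    Fintype.sum_equiv (Equiv.mulRight (swap i j)) _ _ fun σ => by simp [Perm.mul_apply]
  calc Fintype.card α • ∑ σ : Perm α, f (σ i) = ∑ j, ∑ σ : Perm α, f (σ j) := by
        simp [hslot]
    _ = ∑ σ : Perm α, ∑ j, f (σ j) := sum_comm
    _ = (Fintype.card α).factorial • ∑ j, f j := by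
        simp [Equiv.sum_comp, Fintype.card_perm]

theorem Equiv.Perm.card_mul_sum_prod_rpow_le {α : Type*} [Fintype α] [DecidableEq α]
    {a x : α → ℝ} (ha : ∀ i, 0 ≤ a i) (hs : 0 < ∑ i, a i) (hx : ∀ i, 0 ≤ x i) :
    Fintype.card α * ∑ σ : Perm α, ∏ i, x (σ i) ^ a i
      ≤ (Fintype.card α).factorial * ∑ j, x j ^ (∑ i, a i) := by
  set s := ∑ i, a i
  have hslot : ∀ i, (Fintype.card α : ℝ) * ∑ σ : Perm α, x (σ i) ^ s
      = (Fintype.card α).factorial * ∑ j, x j ^ s := fun i => by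
    simpa only [nsmul_eq_mul] using card_smul_sum_apply (fun j => x j ^ s) i
  calc (Fintype.card α : ℝ) * ∑ σ : Perm α, ∏ i, x (σ i) ^ a i
      ≤ Fintype.card α * ∑ σ : Perm α, ∑ i, a i / s * x (σ i) ^ s := by
        gcongr with σ
        exact Real.prod_rpow_le_sum_div_mul_rpow univ (fun i _ => ha i) hs (fun i _ => hx _)
    _ = ∑ i, a i / s * (Fintype.card α * ∑ σ : Perm α, x (σ i) ^ s) := by
        simp only [mul_sum]
        rw [sum_comm]
        exact sum_congr rfl fun i _ => sum_congr rfl fun σ _ => by ring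
    _ = (Fintype.card α).factorial * ∑ j, x j ^ s := by
        simp only [hslot]
        rw [← sum_mul, ← sum_div, div_self hs.ne', one_mul]

theorem muirhead_K_small_s (m : ℕ) (hm : 1 ≤ m) (a x : Fin m → ℝ)
    (ha : ∀ i, 0 ≤ a i) (hs : 0 < ∑ i, a i) (hs1 : ∑ i, a i ≤ 1)
    (hx : ∀ i, 0 ≤ x i) :
    ∑ σ : Equiv.Perm (Fin m), ∏ i, (x (σ i)) ^ (a i)
      ≤ (Nat.factorial m : ℝ) * (m : ℝ) ^ (-(∑ i, a i)) * (∑ i, x i) ^ (∑ i, a i) := by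
  set s := ∑ i, a i
  have hmpos : (0 : ℝ) < m := by exact_mod_cast hm
  have hsymm := Equiv.Perm.card_mul_sum_prod_rpow_le ha hs hx
  have hconcave := Real.sum_rpow_le_card_mul_rpow_div (univ_nonempty_iff.mpr ⟨⟨0, hm⟩⟩)
    (fun i _ => hx i) hs.le hs1
  simp only [Fintype.card_fin, card_univ] at hsymm hconcave
  refine le_of_mul_le_mul_left (hsymm.trans ?_) hmpos
  calc (m.factorial : ℝ) * ∑ j, x j ^ s ≤ m.factorial * (m * ((∑ j, x j) / m) ^ s) := by
        gcongr
    _ = m * (m.factorial * (m : ℝ) ^ (-s) * (∑ j, x j) ^ s) := by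
        rw [Real.div_rpow (sum_nonneg fun j _ => hx j) hmpos.le, Real.rpow_neg hmpos.le]
        ring
end

section
/- Let m ≥ 1, and let a₁,…,a_m ≥ 0 with s := a₁ + ⋯ + a_m ≥ 1. Then for all x₁,…,x_m ≥ 0 (with convention 0^0 = 1), ∑_{σ ∈ S_m} x_{σ(1)}^{a₁} ⋯ x_{σ(m)}^{a_m} ≤ (m-1)! · (x₁ + ⋯ + x_m)^s. -/
/-!
Write `s = ∑ aᵢ` and `X = ∑ xᵢ`. For each permutation `σ`, weighted AM-GM with weights `aᵢ / s`
bounds `∏ x_{σ i} ^ aᵢ` by `Wσ ^ s`, where `Wσ = ∑ (aᵢ / s) x_{σ i} ≤ X`; since `s ≥ 1` this is at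
most `Wσ · X ^ (s - 1)`. Summing over `σ`, each `x_{σ i}` averages out: `∑_σ x_{σ i} = (m - 1)! · X`,
so `∑_σ Wσ = (m - 1)! · X`, which gives the bound `(m - 1)! · X ^ s`.
-/

open Equiv

theorem Equiv.Perm.sum_apply_eq_factorial_nsmul_sum {ι M : Type*} [Fintype ι] [DecidableEq ι]
    [AddCommMonoid M] [IsAddTorsionFree M] (f : ι → M) (i : ι) :
    ∑ σ : Perm ι, f (σ i) = (Fintype.card ι - 1).factorial • ∑ j, f j := by
  have h_indep : ∀ j, ∑ σ : Perm ι, f (σ j) = ∑ σ : Perm ι, f (σ i) := fun j =>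
    Fintype.sum_equiv (Equiv.mulRight (swap j i)) _ _ fun σ => by simp
  have h_card : Fintype.card ι ≠ 0 := (Fintype.card_pos_iff.2 ⟨i⟩).ne'
  apply nsmul_right_injective h_card
  calc Fintype.card ι • ∑ σ : Perm ι, f (σ i)
      = ∑ j, ∑ σ : Perm ι, f (σ j) := by simp [h_indep]
    _ = ∑ σ : Perm ι, ∑ j, f (σ j) := Finset.sum_comm
    _ = (Fintype.card ι).factorial • ∑ j, f j := by
        simp [Equiv.sum_comp, Fintype.card_perm]
    _ = Fintype.card ι • ((Fintype.card ι - 1).factorial • ∑ j, f j) := by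
        rw [smul_smul, Nat.mul_factorial_pred h_card]

namespace Real

theorem rpow_le_mul_rpow_sub_one {w X s : ℝ} (hw : 0 ≤ w) (hwX : w ≤ X) (hs : 1 ≤ s) :
    w ^ s ≤ w * X ^ (s - 1) := by
  calc w ^ s = w ^ (s - 1) * w := by rw [← rpow_add_one' hw (by linarith), sub_add_cancel]
    _ ≤ X ^ (s - 1) * w := by gcongr
    _ = w * X ^ (s - 1) := mul_comm _ _

theorem prod_rpow_le_weighted_sum_mul_rpow {ι : Type*} (t : Finset ι) {a y : ι → ℝ} {X : ℝ}
    (ha : ∀ i ∈ t, 0 ≤ a i) (hs : 1 ≤ ∑ i ∈ t, a i) (hy : ∀ i ∈ t, 0 ≤ y i)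
    (hyX : ∀ i ∈ t, y i ≤ X) :
    ∏ i ∈ t, y i ^ a i
      ≤ (∑ i ∈ t, a i / (∑ j ∈ t, a j) * y i) * X ^ ((∑ j ∈ t, a j) - 1) := by
  set s := ∑ j ∈ t, a j
  have hs0 : 0 < s := by linarith
  have hw : ∀ i ∈ t, 0 ≤ a i / s := fun i hi => div_nonneg (ha i hi) hs0.le
  have hw_sum : ∑ i ∈ t, a i / s = 1 := by rw [← Finset.sum_div, div_self hs0.ne']
  have h_mean_nonneg : 0 ≤ ∑ i ∈ t, a i / s * y i :=
    Finset.sum_nonneg fun i hi => mul_nonneg (hw i hi) (hy i hi)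
  have h_mean_le : ∑ i ∈ t, a i / s * y i ≤ X :=
    calc ∑ i ∈ t, a i / s * y i ≤ ∑ i ∈ t, a i / s * X :=
          Finset.sum_le_sum fun i hi => mul_le_mul_of_nonneg_left (hyX i hi) (hw i hi)
      _ = X := by rw [← Finset.sum_mul, hw_sum, one_mul]
  have h_prod : ∏ i ∈ t, y i ^ a i = (∏ i ∈ t, y i ^ (a i / s)) ^ s := by
    rw [← finsetProd_rpow _ _ fun i hi => rpow_nonneg (hy i hi) _]
    refine Finset.prod_congr rfl fun i hi => ?_
    rw [← rpow_mul (hy i hi), div_mul_cancel₀ _ hs0.ne']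
  rw [h_prod]
  calc (∏ i ∈ t, y i ^ (a i / s)) ^ s ≤ (∑ i ∈ t, a i / s * y i) ^ s :=
        rpow_le_rpow (Finset.prod_nonneg fun i hi => rpow_nonneg (hy i hi) _)
          (geom_mean_le_arith_mean_weighted t _ _ hw hw_sum hy) hs0.le
    _ ≤ _ := rpow_le_mul_rpow_sub_one h_mean_nonneg h_mean_le hs

end Real

theorem muirhead_K_large_s_general (m : ℕ) (a x : Fin m → ℝ)
    (ha : ∀ i, 0 ≤ a i) (hs : 1 ≤ ∑ i, a i)
    (hx : ∀ i, 0 ≤ x i) :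
    ∑ σ : Equiv.Perm (Fin m), ∏ i, (x (σ i)) ^ (a i)
      ≤ (Nat.factorial (m - 1) : ℝ) * (∑ i, x i) ^ (∑ i, a i) := by
  set s := ∑ i, a i
  set X := ∑ i, x i
  have hX : 0 ≤ X := Finset.sum_nonneg fun i _ => hx i
  have h_term : ∀ σ : Perm (Fin m),
      ∏ i, x (σ i) ^ a i ≤ (∑ i, a i / s * x (σ i)) * X ^ (s - 1) := fun σ =>
    Real.prod_rpow_le_weighted_sum_mul_rpow _ (fun i _ => ha i) hs (fun i _ => hx _)
      fun i _ => Finset.single_le_sum (fun j _ => hx j) (Finset.mem_univ _)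
  have h_avg : ∑ σ : Perm (Fin m), ∑ i, a i / s * x (σ i) = (m - 1).factorial * X := by
    rw [Finset.sum_comm]
    simp_rw [← Finset.mul_sum, Perm.sum_apply_eq_factorial_nsmul_sum, Fintype.card_fin,
      nsmul_eq_mul]
    rw [← Finset.sum_mul, ← Finset.sum_div, div_self (by linarith : s ≠ 0), one_mul]
  calc ∑ σ : Perm (Fin m), ∏ i, x (σ i) ^ a i
      ≤ ∑ σ : Perm (Fin m), (∑ i, a i / s * x (σ i)) * X ^ (s - 1) :=
        Finset.sum_le_sum fun σ _ => h_term σ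
    _ = (m - 1).factorial * (X * X ^ (s - 1)) := by rw [← Finset.sum_mul, h_avg, mul_assoc]
    _ = (m - 1).factorial * X ^ s := by
        rw [← Real.rpow_one_add' hX (by linarith), add_sub_cancel]

theorem muirhead_K_large_s (m : ℕ) (hm : 1 ≤ m) (a x : Fin m → ℝ)
    (ha : ∀ i, 0 ≤ a i) (hs : 1 ≤ ∑ i, a i)
    (hx : ∀ i, 0 ≤ x i) :
    ∑ σ : Equiv.Perm (Fin m), ∏ i, (x (σ i)) ^ (a i)
      ≤ (Nat.factorial (m - 1) : ℝ) * (∑ i, x i) ^ (∑ i, a i) :=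
  muirhead_K_large_s_general m a x ha hs hx
end

section
/- Let m ≥ 1, and let a₁,…,a_m ≥ 0 with s := a₁ + ⋯ + a_m ≥ 1, and suppose a_i ≥ (s-1)/m for all i. Then for all x₁,…,x_m ≥ 0 (with convention 0^0 = 1), ∑_{σ ∈ S_m} x_{σ(1)}^{a₁} ⋯ x_{σ(m)}^{a_m} ≤ m! · m^{-s} · (x₁ + ⋯ + x_m)^s. -/
/-!
Put `e = (s - 1) / m` and `b i = a i - e`: balancedness says `b i ≥ 0`, and `∑ b i = 1`.
Each term factors as `(∏ x) ^ e * ∏ x (σ i) ^ b i`. Weighted AM-GM bounds the second factor by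
`∑ b i * x (σ i)`, whose sum over all `σ` is `(m! / m) * ∑ x`, and unweighted AM-GM bounds
`(∏ x) ^ e` by `(∑ x / m) ^ (s - 1)`.
-/

open Finset
open scoped Nat

namespace Equiv.Perm

variable {α M : Type*} [Fintype α] [DecidableEq α] [AddCommMonoid M]

theorem sum_apply_eq_sum_apply (f : α → M) (i j : α) :
    ∑ σ : Perm α, f (σ i) = ∑ σ : Perm α, f (σ j) :=
  Fintype.sum_equiv (Equiv.mulRight (swap j i)) _ _ fun σ => by simp [mul_apply]

theorem card_nsmul_sum_apply (f : α → M) (i : α) :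
    Fintype.card α • ∑ σ : Perm α, f (σ i) = (Fintype.card α)! • ∑ j, f j := calc
  Fintype.card α • ∑ σ : Perm α, f (σ i) = ∑ j, ∑ σ : Perm α, f (σ j) := by
    simp only [sum_apply_eq_sum_apply f _ i, sum_const, card_univ]
  _ = ∑ σ : Perm α, ∑ j, f j := by
    rw [sum_comm]; exact sum_congr rfl fun σ _ => Equiv.sum_comp σ f
  _ = (Fintype.card α)! • ∑ j, f j := by rw [sum_const, card_univ, Fintype.card_perm]

theorem sum_sum_mul_apply {K : Type*} [Field K] [CharZero K] [Nonempty α] (w f : α → K) :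
    ∑ σ : Perm α, ∑ i, w i * f (σ i)
      = (Fintype.card α)! / Fintype.card α * (∑ i, w i) * ∑ j, f j := by
  have hcard : (Fintype.card α : K) ≠ 0 := Nat.cast_ne_zero.2 Fintype.card_ne_zero
  have h i : ∑ σ : Perm α, f (σ i) = (Fintype.card α)! / Fintype.card α * ∑ j, f j := by
    rw [div_mul_eq_mul_div, eq_div_iff hcard, mul_comm]
    simpa only [nsmul_eq_mul] using card_nsmul_sum_apply f i
  rw [sum_comm]
  simp only [← mul_sum, h, ← sum_mul]
  ring

end Equiv.Perm

namespace Real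

variable {ι : Type*} {s : Finset ι}

theorem prod_rpow_add_le_mul_sum {y b : ι → ℝ} {e : ℝ} (hy : ∀ i ∈ s, 0 ≤ y i) (he : 0 ≤ e)
    (hb : ∀ i ∈ s, 0 ≤ b i) (hb₁ : ∑ i ∈ s, b i = 1) :
    ∏ i ∈ s, y i ^ (e + b i) ≤ (∏ i ∈ s, y i) ^ e * ∑ i ∈ s, b i * y i := by
  rw [prod_congr rfl fun i hi => rpow_add_of_nonneg (hy i hi) he (hb i hi), prod_mul_distrib,
    finsetProd_rpow s y hy]
  gcongr
  · exact rpow_nonneg (prod_nonneg hy) e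
  · exact geom_mean_le_arith_mean_weighted s b y hb hb₁ hy

theorem prod_rpow_div_card_le_mean_rpow {x : ι → ℝ} {r : ℝ} (hs : s.Nonempty)
    (hx : ∀ i ∈ s, 0 ≤ x i) (hr : 0 ≤ r) :
    (∏ i ∈ s, x i) ^ (r / #s) ≤ ((∑ i ∈ s, x i) / #s) ^ r := by
  have hcard : (0 : ℝ) < #s := by exact_mod_cast hs.card_pos
  have amgm := geom_mean_le_arith_mean s (fun _ => 1) x (fun _ _ => zero_le_one)
    (by simpa using hcard) hx
  simp only [rpow_one, sum_const, nsmul_eq_mul, mul_one, one_mul] at amgm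
  rw [div_eq_inv_mul, rpow_mul (prod_nonneg hx)]
  exact rpow_le_rpow (rpow_nonneg (prod_nonneg hx) _) amgm hr

theorem div_rpow_sub_one_mul_div_mul {m t s c : ℝ} (hm : 0 < m) (ht : 0 ≤ t) (hs : s ≠ 0) :
    (t / m) ^ (s - 1) * (c / m * t) = c * m ^ (-s) * t ^ s := by
  have hts : t ^ s = t ^ (s - 1) * t := by
    simpa using rpow_add' ht (y := s - 1) (z := 1) (by simpa using hs)
  rw [div_rpow ht hm.le, rpow_neg hm.le, rpow_sub hm, rpow_one, hts]
  field_simp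

end Real

theorem muirhead_K_balanced_general (m : ℕ) (hm : 1 ≤ m) (a x : Fin m → ℝ)
    (hs : 1 ≤ ∑ i, a i)
    (hbal : ∀ i, (∑ j, a j - 1) / m ≤ a i)
    (hx : ∀ i, 0 ≤ x i) :
    ∑ σ : Equiv.Perm (Fin m), ∏ i, (x (σ i)) ^ (a i)
      ≤ (Nat.factorial m : ℝ) * (m : ℝ) ^ (-(∑ i, a i)) * (∑ i, x i) ^ (∑ i, a i) := by
  have : Nonempty (Fin m) := ⟨⟨0, hm⟩⟩
  set s := ∑ i, a i
  set t := ∑ i, x i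
  set e := (s - 1) / m with he
  have hm₀ : (0 : ℝ) < m := by exact_mod_cast hm
  have ht : 0 ≤ t := sum_nonneg fun i _ => hx i
  have hb₁ : ∑ i, (a i - e) = 1 := by
    rw [sum_sub_distrib, sum_const, card_univ, Fintype.card_fin, nsmul_eq_mul, he]
    field_simp
    ring
  have hσ (σ : Equiv.Perm (Fin m)) :
      ∏ i, x (σ i) ^ a i ≤ (∏ i, x i) ^ e * ∑ i, (a i - e) * x (σ i) := by
    simpa [Equiv.prod_comp σ x] using Real.prod_rpow_add_le_mul_sum (s := univ) (y := x ∘ σ)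
      (e := e) (fun i _ => hx _) (by positivity) (fun i _ => sub_nonneg.2 (hbal i)) hb₁
  have hgm : (∏ i, x i) ^ e ≤ (t / m) ^ (s - 1) := by
    simpa using Real.prod_rpow_div_card_le_mean_rpow univ_nonempty (fun i _ => hx i)
      (by linarith : 0 ≤ s - 1)
  calc ∑ σ : Equiv.Perm (Fin m), ∏ i, x (σ i) ^ a i
      ≤ (∏ i, x i) ^ e * (m ! / m * t) := by
        grw [sum_le_sum fun σ _ => hσ σ, ← mul_sum, Equiv.Perm.sum_sum_mul_apply, hb₁,
          Fintype.card_fin, mul_one]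
    _ ≤ (t / m) ^ (s - 1) * (m ! / m * t) := by gcongr
    _ = m ! * (m : ℝ) ^ (-s) * t ^ s :=
        Real.div_rpow_sub_one_mul_div_mul hm₀ ht (by linarith)

theorem muirhead_K_balanced (m : ℕ) (hm : 1 ≤ m) (a x : Fin m → ℝ)
    (ha : ∀ i, 0 ≤ a i) (hs : 1 ≤ ∑ i, a i)
    (hbal : ∀ i, (∑ j, a j - 1) / m ≤ a i)
    (hx : ∀ i, 0 ≤ x i) :
    ∑ σ : Equiv.Perm (Fin m), ∏ i, (x (σ i)) ^ (a i)
      ≤ (Nat.factorial m : ℝ) * (m : ℝ) ^ (-(∑ i, a i)) * (∑ i, x i) ^ (∑ i, a i) :=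
  muirhead_K_balanced_general m hm a x hs hbal hx
end

section
/- Let α₁, α₂ ∈ [1,2] with 1/α₁ + 1/α₂ > 1, and let β > 0 satisfy 1/β = 1/α₁ + 1/α₂ − 1. Then for all x₁, x₂ > 0, (x₁^{β/α₁} x₂^{β/α₂} + x₂^{β/α₁} x₁^{β/α₂})^{1/β} ≤ (1/2)(x₁ + x₂)^{1/α₁ + 1/α₂}. -/
/-!
Put `p = β/α₁`, `q = β/α₂`. The conjugate-exponent relation gives `p + q = 1 + β`, and `αᵢ ≤ 2`
gives `p, q ≥ β/2`, hence `|p - q| ≤ 1`. Writing `x^p y^q + y^p x^q = (xy)^q (x^{p-q} + y^{p-q})`,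
AM–GM bounds `xy` and concavity of `t ↦ t^{p-q}` bounds the sum, both by powers of `(x+y)/2`;
this is the bound `x^p y^q + y^p x^q ≤ 2^{1-p-q} (x+y)^{p+q}`, and raising it to the power
`1/β` gives the claim.
-/

open Real

lemma rpow_add_rpow_le_two_mul_rpow_half_add {r : ℝ} (hr₀ : 0 ≤ r) (hr₁ : r ≤ 1)
    {x y : ℝ} (hx : 0 ≤ x) (hy : 0 ≤ y) :
    x ^ r + y ^ r ≤ 2 * ((x + y) / 2) ^ r := by
  have h := (concaveOn_rpow hr₀ hr₁).2 (Set.mem_Ici.2 hx) (Set.mem_Ici.2 hy)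
    (by norm_num : (0 : ℝ) ≤ 1 / 2) (by norm_num : (0 : ℝ) ≤ 1 / 2) (by norm_num)
  simp only [smul_eq_mul] at h
  rw [show (1 / 2 : ℝ) * x + 1 / 2 * y = (x + y) / 2 by ring] at h
  linarith

lemma rpow_mul_rpow_add_rpow_mul_rpow_le_of_le {p q : ℝ} (hq : 0 ≤ q) (hqp : q ≤ p)
    (hpq : p - q ≤ 1) {x y : ℝ} (hx : 0 < x) (hy : 0 < y) :
    x ^ p * y ^ q + y ^ p * x ^ q ≤ 2 ^ (1 - (p + q)) * (x + y) ^ (p + q) := by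
  set m := (x + y) / 2
  have hm : 0 < m := by positivity
  have hsplit : x ^ p * y ^ q + y ^ p * x ^ q = (x * y) ^ q * (x ^ (p - q) + y ^ (p - q)) := by
    rw [mul_rpow hx.le hy.le, rpow_sub hx, rpow_sub hy]
    field_simp
  have hamgm : (x * y) ^ q ≤ (m ^ 2) ^ q :=
    rpow_le_rpow (by positivity) (by simp only [m]; nlinarith [sq_nonneg (x - y)]) hq
  have hconc : x ^ (p - q) + y ^ (p - q) ≤ 2 * m ^ (p - q) :=
    rpow_add_rpow_le_two_mul_rpow_half_add (by linarith) hpq hx.le hy.le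
  calc x ^ p * y ^ q + y ^ p * x ^ q
      = (x * y) ^ q * (x ^ (p - q) + y ^ (p - q)) := hsplit
    _ ≤ (m ^ 2) ^ q * (2 * m ^ (p - q)) := by gcongr
    _ = 2 * m ^ (p + q) := by
      rw [← rpow_natCast, ← rpow_mul hm.le, mul_left_comm, ← rpow_add hm]
      congr 2
      ring
    _ = 2 ^ (1 - (p + q)) * (x + y) ^ (p + q) := by
      rw [div_rpow (by positivity) zero_le_two, rpow_sub zero_lt_two, rpow_one]
      field_simp

lemma rpow_mul_rpow_add_rpow_mul_rpow_le {p q : ℝ} (hp : 0 ≤ p) (hq : 0 ≤ q)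
    (hpq : |p - q| ≤ 1) {x y : ℝ} (hx : 0 < x) (hy : 0 < y) :
    x ^ p * y ^ q + y ^ p * x ^ q ≤ 2 ^ (1 - (p + q)) * (x + y) ^ (p + q) := by
  rcases le_total q p with hqp | hpq'
  · exact rpow_mul_rpow_add_rpow_mul_rpow_le_of_le hq hqp (abs_sub_le_iff.1 hpq).1 hx hy
  · convert rpow_mul_rpow_add_rpow_mul_rpow_le_of_le hp hpq' (abs_sub_le_iff.1 hpq).2 hy hx
      using 1 <;> ring_nf

lemma div_add_div_eq_one_add_of_one_div_eq {α₁ α₂ β : ℝ} (hβ : β ≠ 0)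
    (hβdef : 1 / β = 1 / α₁ + 1 / α₂ - 1) : β / α₁ + β / α₂ = 1 + β := by
  have : β * (1 / β) = β * (1 / α₁ + 1 / α₂ - 1) := by rw [hβdef]
  rw [mul_one_div_cancel hβ] at this
  linear_combination -this

theorem binary_step_bound_general (α₁ α₂ β : ℝ)
    (h₁ : α₁ ∈ Set.Icc (1:ℝ) 2) (h₂ : α₂ ∈ Set.Icc (1:ℝ) 2)
    (hβ : 0 < β)
    (hβdef : 1/β = 1/α₁ + 1/α₂ - 1)
    (x₁ x₂ : ℝ) (hx₁ : 0 < x₁) (hx₂ : 0 < x₂) :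
    (x₁ ^ (β/α₁) * x₂ ^ (β/α₂) + x₂ ^ (β/α₁) * x₁ ^ (β/α₂)) ^ (1/β)
      ≤ (1/2) * (x₁ + x₂) ^ (1/α₁ + 1/α₂) := by
  have hsum := div_add_div_eq_one_add_of_one_div_eq hβ.ne' hβdef
  have hhalf₁ : β / 2 ≤ β / α₁ := div_le_div_of_nonneg_left hβ.le (by linarith [h₁.1]) h₁.2
  have hhalf₂ : β / 2 ≤ β / α₂ := div_le_div_of_nonneg_left hβ.le (by linarith [h₂.1]) h₂.2
  have hgap : |β / α₁ - β / α₂| ≤ 1 := abs_sub_le_iff.2 ⟨by linarith, by linarith⟩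
  have hbound := rpow_mul_rpow_add_rpow_mul_rpow_le (by linarith) (by linarith) hgap hx₁ hx₂
  calc (x₁ ^ (β/α₁) * x₂ ^ (β/α₂) + x₂ ^ (β/α₁) * x₁ ^ (β/α₂)) ^ (1/β)
      ≤ (2 ^ (1 - (1 + β)) * (x₁ + x₂) ^ (1 + β)) ^ (1/β) := by
        rw [← hsum]; gcongr
    _ = (1/2) * (x₁ + x₂) ^ (1/α₁ + 1/α₂) := by
      rw [mul_rpow (by positivity) (by positivity), ← rpow_mul zero_le_two,
        ← rpow_mul (by positivity), show 1/α₁ + 1/α₂ = (1 + β) * (1/β) by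
          rw [add_mul, one_mul, mul_one_div_cancel hβ.ne', hβdef]; ring,
        show (1 - (1 + β)) * (1/β) = -1 by field_simp; ring, rpow_neg_one, inv_eq_one_div]

theorem binary_step_bound (α₁ α₂ β : ℝ)
    (h₁ : α₁ ∈ Set.Icc (1:ℝ) 2) (h₂ : α₂ ∈ Set.Icc (1:ℝ) 2)
    (hsum : 1 < 1/α₁ + 1/α₂) (hβ : 0 < β)
    (hβdef : 1/β = 1/α₁ + 1/α₂ - 1)
    (x₁ x₂ : ℝ) (hx₁ : 0 < x₁) (hx₂ : 0 < x₂) :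
    (x₁ ^ (β/α₁) * x₂ ^ (β/α₂) + x₂ ^ (β/α₁) * x₁ ^ (β/α₂)) ^ (1/β)
      ≤ (1/2) * (x₁ + x₂) ^ (1/α₁ + 1/α₂) :=
  binary_step_bound_general α₁ α₂ β h₁ h₂ hβ hβdef x₁ x₂ hx₁ hx₂
end

section
/- (m-ary tree, n = 2 case) Let T be the rooted m-ary tree of k levels with free vertices T₀ = {1,…,m}^k, nonnegative weights μ on T₀, and μ(C_j) = ∑_{i ∈ T₀, j ⪯ i} μ(i). Let f : T → ℝ₊ and fix a level 0 ≤ L ≤ k−1. Then ∑ μ(i₁) μ(i₂) f(i₁ ∧ i₂), over ordered pairs of distinct i₁, i₂ ∈ T₀ with |i₁ ∧ i₂| = L, is at most (1 − 1/m) ∑_{|j| = L} f(j) μ(C_j)². -/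
/-!
Group the ordered pairs by their common prefix `j` of length `L`, and the leaves of the cylinder
`C_j` by their letter `a` at position `L`, with masses `S_a`. The pairs branching at `j` are exactly
those with different letters there, so their energy is `(∑ S_a)² - ∑ S_a²`, and Cauchy–Schwarz
`(∑ S_a)² ≤ m ∑ S_a²` bounds this by `(1 - 1/m) μ(C_j)²`.
-/

open Finset

theorem sq_sum_sub_sum_sq_le {ι K : Type*} [Field K] [LinearOrder K] [IsStrictOrderedRing K]
    (s : Finset ι) (x : ι → K) :
    (∑ i ∈ s, x i) ^ 2 - ∑ i ∈ s, x i ^ 2 ≤ (1 - 1 / #s) * (∑ i ∈ s, x i) ^ 2 := by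
  rcases s.eq_empty_or_nonempty with rfl | hs
  · simp
  have hcard : (0 : K) < #s := by exact_mod_cast hs.card_pos
  have hcs : (∑ i ∈ s, x i) ^ 2 / #s ≤ ∑ i ∈ s, x i ^ 2 :=
    (div_le_iff₀' hcard).2 sq_sum_le_card_mul_sum_sq
  rw [sub_mul, one_mul, one_div_mul_eq_div]
  linarith

theorem sum_filter_ne_mul_eq_sq_sub {α β R : Type*} [DecidableEq β] [Fintype β] [CommRing R]
    (s : Finset α) (g : α → β) (μ : α → R) :
    ∑ p ∈ (s ×ˢ s).filter (fun p => g p.1 ≠ g p.2), μ p.1 * μ p.2 =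
      (∑ i ∈ s, μ i) ^ 2 - ∑ b, (∑ i ∈ s with g i = b, μ i) ^ 2 := by
  have hfib : ∀ b, ((s ×ˢ s).filter (fun p => g p.1 = g p.2)).filter (fun p => g p.1 = b) =
      (s.filter (g · = b)) ×ˢ (s.filter (g · = b)) := by
    intro b; ext p
    simp only [mem_filter, mem_product]
    constructor
    · rintro ⟨⟨⟨h1, h2⟩, he⟩, hb⟩; exact ⟨⟨h1, hb⟩, h2, he ▸ hb⟩
    · rintro ⟨⟨h1, hb⟩, h2, hb'⟩; exact ⟨⟨⟨h1, h2⟩, hb.trans hb'.symm⟩, hb⟩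
  have hdiag : ∑ p ∈ (s ×ˢ s).filter (fun p => g p.1 = g p.2), μ p.1 * μ p.2 =
      ∑ b, (∑ i ∈ s with g i = b, μ i) ^ 2 := by
    rw [← sum_fiberwise _ (fun p => g p.1)]
    refine sum_congr rfl fun b _ => ?_
    rw [hfib, sum_product, sq, sum_mul_sum]
  rw [← hdiag, eq_sub_iff_add_eq, sum_filter_not_add_sum_filter, sum_product, sq, sum_mul_sum]

theorem sum_filter_ne_mul_le {α β K : Type*} [DecidableEq β] [Fintype β]
    [Field K] [LinearOrder K] [IsStrictOrderedRing K] (s : Finset α) (g : α → β) (μ : α → K) :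
    ∑ p ∈ (s ×ˢ s).filter (fun p => g p.1 ≠ g p.2), μ p.1 * μ p.2 ≤
      (1 - 1 / Fintype.card β) * (∑ i ∈ s, μ i) ^ 2 := by
  rw [sum_filter_ne_mul_eq_sq_sub, ← sum_fiberwise s g μ]
  exact sq_sum_sub_sum_sq_le univ _

theorem sum_filter_eq_and_ne_mul_eq {α β γ R : Type*} [DecidableEq β] [DecidableEq γ] [Fintype γ]
    [CommSemiring R] (s : Finset α) (π : α → γ) (g : α → β) (μ : α → R) (f : γ → R) :
    ∑ p ∈ (s ×ˢ s).filter (fun p => π p.1 = π p.2 ∧ g p.1 ≠ g p.2), μ p.1 * μ p.2 * f (π p.1) =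
      ∑ j, f j * ∑ p ∈ (s.filter (π · = j) ×ˢ s.filter (π · = j)).filter
        (fun p => g p.1 ≠ g p.2), μ p.1 * μ p.2 := by
  rw [← sum_fiberwise _ (fun p => π p.1)]
  refine sum_congr rfl fun j _ => ?_
  have hfib : ((s ×ˢ s).filter (fun p => π p.1 = π p.2 ∧ g p.1 ≠ g p.2)).filter
      (fun p => π p.1 = j) =
      (s.filter (π · = j) ×ˢ s.filter (π · = j)).filter (fun p => g p.1 ≠ g p.2) := by
    ext p
    simp only [mem_filter, mem_product]
    constructor
    · rintro ⟨⟨⟨h1, h2⟩, he, hg⟩, hj⟩; exact ⟨⟨⟨h1, hj⟩, h2, he ▸ hj⟩, hg⟩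
    · rintro ⟨⟨⟨h1, hj⟩, h2, hj'⟩, hg⟩; exact ⟨⟨⟨h1, h2⟩, hj.trans hj'.symm, hg⟩, hj⟩
  rw [hfib, mul_sum]
  refine sum_congr rfl fun p hp => ?_
  rw [(mem_filter.1 (mem_product.1 (mem_filter.1 hp).1).1).2, mul_comm]

theorem Fin.take_eq_take_iff {α : Type*} {n L : ℕ} (h : L ≤ n) (x y : Fin n → α) :
    Fin.take L h x = Fin.take L h y ↔ ∀ t : Fin n, (t : ℕ) < L → x t = y t := by
  refine ⟨fun hxy t ht => ?_, fun hxy => funext fun t => hxy _ (by simp)⟩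
  simpa using congrFun hxy ⟨t, ht⟩

theorem mary_tree_pair_energy_general (m : ℕ) (k L : ℕ) (hL : L < k)
    (μ : (Fin k → Fin m) → ℝ)
    (f : (Fin L → Fin m) → ℝ) (hf : ∀ j, 0 ≤ f j) :
    ∑ p ∈ Finset.univ.filter (fun p : (Fin k → Fin m) × (Fin k → Fin m) =>
        (∀ t : Fin k, (t : ℕ) < L → p.1 t = p.2 t) ∧ p.1 ⟨L, hL⟩ ≠ p.2 ⟨L, hL⟩),
      μ p.1 * μ p.2 * f (fun t => p.1 (Fin.castLE hL.le t))
    ≤ (1 - 1/(m : ℝ)) * ∑ j : Fin L → Fin m,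
        f j * (∑ i ∈ Finset.univ.filter
          (fun i : Fin k → Fin m => ∀ t : Fin L, i (Fin.castLE hL.le t) = j t), μ i) ^ 2 := by
  let pre : (Fin k → Fin m) → Fin L → Fin m := Fin.take L hL.le
  let C : (Fin L → Fin m) → Finset (Fin k → Fin m) := fun j => univ.filter (pre · = j)
  calc _ = ∑ p ∈ (univ ×ˢ univ).filter (fun p : (Fin k → Fin m) × (Fin k → Fin m) =>
          pre p.1 = pre p.2 ∧ p.1 ⟨L, hL⟩ ≠ p.2 ⟨L, hL⟩), μ p.1 * μ p.2 * f (pre p.1) := by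
        rw [univ_product_univ]
        exact sum_congr (filter_congr fun p _ => by rw [Fin.take_eq_take_iff]) fun _ _ => rfl
    _ = ∑ j, f j * ∑ p ∈ (C j ×ˢ C j).filter (fun p => p.1 ⟨L, hL⟩ ≠ p.2 ⟨L, hL⟩),
          μ p.1 * μ p.2 :=
        sum_filter_eq_and_ne_mul_eq univ pre (· ⟨L, hL⟩) μ f
    _ ≤ ∑ j, f j * ((1 - 1 / m) * (∑ i ∈ C j, μ i) ^ 2) := by
        gcongr with j
        · exact hf j
        · simpa only [Fintype.card_fin] using sum_filter_ne_mul_le (C j) (· ⟨L, hL⟩) μ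
    _ = _ := by
        rw [mul_sum]
        refine sum_congr rfl fun j _ => ?_
        rw [mul_left_comm]
        congr 3
        exact sum_congr (filter_congr fun i _ => funext_iff) fun _ _ => rfl

theorem mary_tree_pair_energy (m : ℕ) (hm : 2 ≤ m) (k L : ℕ) (hL : L < k)
    (μ : (Fin k → Fin m) → ℝ) (hμ : ∀ i, 0 ≤ μ i)
    (f : (Fin L → Fin m) → ℝ) (hf : ∀ j, 0 ≤ f j) :
    ∑ p ∈ Finset.univ.filter (fun p : (Fin k → Fin m) × (Fin k → Fin m) =>
        (∀ t : Fin k, (t : ℕ) < L → p.1 t = p.2 t) ∧ p.1 ⟨L, hL⟩ ≠ p.2 ⟨L, hL⟩),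
      μ p.1 * μ p.2 * f (fun t => p.1 (Fin.castLE hL.le t))
    ≤ (1 - 1/(m : ℝ)) * ∑ j : Fin L → Fin m,
        f j * (∑ i ∈ Finset.univ.filter
          (fun i : Fin k → Fin m => ∀ t : Fin L, i (Fin.castLE hL.le t) = j t), μ i) ^ 2 :=
  mary_tree_pair_energy_general m k L hL μ f hf
end
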